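/- arXiv:2106.00265 — 4 statements merged into one kernel-verified Lean document; each statement's English description precedes it below -/
import Mathlib

section
/- Let Z and W be measurable spaces, let P_Z be a probability measure on Z, let n ≥ 1, and let Q : Z^n → P(W) be a Markov kernel (a data-dependent prior). Let A : Z^n × W → ℝ² be measurable, let F : ℝ² → ℝ be convex, let f(D,w) = F(A(D,w)), and set ξ = ∫∫ exp(f(D,w)) Q(D)(dw) (P_Z^{⊗n})(dD), assumed finite. Then for every δ ∈ (0,1), with P_Z^{⊗n}-probability at least 1−δ over the draw of D, the following holds simultaneously for every probability measure ρ on W with ρ ≪ Q(D), both coordinates of A(D,·) ρ-integrable, and KL(ρ‖Q(D)) < ∞: F(∫ A(D,w) ρ(dw)) ≤ KL(ρ‖Q(D)) + log(ξ/δ). -/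
open MeasureTheory ProbabilityTheory

set_option maxHeartbeats 1000000

section Aux

/-- Supporting hyperplane: a convex continuous function on the whole space admits an affine
minorant touching it at any given point. -/
lemma exists_affine_minorant {E : Type*} [NormedAddCommGroup E] [NormedSpace ℝ E]
    (F : E → ℝ) (hF : ConvexOn ℝ Set.univ F) (hc : Continuous F) (m : E) :
    ∃ ψ : E →L[ℝ] ℝ, ∀ x, F m + (ψ x - ψ m) ≤ F x := by
  set s : Set (E × ℝ) := {p | F p.1 < p.2} with hs
  have hsconv : Convex ℝ s := by
    intro p hp q hq a b ha hb hab
    have h1 := hF.2 (Set.mem_univ p.1) (Set.mem_univ q.1) ha hb hab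
    have h2 : a * F p.1 + b * F q.1 < a * p.2 + b * q.2 := by
      rcases ha.eq_or_lt with rfl | ha'
      · simp only [zero_mul, zero_add]
        have hb1 : b = 1 := by linarith
        simpa [hb1, hs] using hq
      · rcases hb.eq_or_lt with rfl | hb'
        · have ha1 : a = 1 := by linarith
          simpa [ha1, hs] using hp
        · have := mul_lt_mul_of_pos_left hp ha'
          have := mul_lt_mul_of_pos_left hq hb'
          simp only [hs, Set.mem_setOf_eq] at hp hq
          nlinarith
    simpa [hs, smul_eq_mul] using lt_of_le_of_lt (by simpa using h1) h2
  have hsopen : IsOpen s := isOpen_lt (hc.comp continuous_fst) continuous_snd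
  have hmem : ((m, F m) : E × ℝ) ∉ s := by simp [hs]
  obtain ⟨φ, hφ⟩ := geometric_hahn_banach_open_point hsconv hsopen hmem
  set c : ℝ := φ (0, 1) with hcdef
  have hφ_add : ∀ (x : E) (t : ℝ), φ (x, t) = φ (x, 0) + t * c := by
    intro x t
    have hxt : ((x, t) : E × ℝ) = (x, 0) + t • ((0 : E), (1 : ℝ)) := by
      simp [Prod.ext_iff]
    rw [hxt, map_add, φ.map_smul, smul_eq_mul, hcdef]
  have hc0 : c < 0 := by
    have h1 : ((m, F m + 1) : E × ℝ) ∈ s := by simp [hs]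
    have h2 := hφ _ h1
    rw [hφ_add m (F m + 1), hφ_add m (F m)] at h2
    nlinarith
  have key : ∀ x, φ (x, 0) + F x * c ≤ φ (m, 0) + F m * c := by
    intro x
    by_contra h
    push_neg at h
    set t : ℝ := (φ (x, 0) + F x * c - (φ (m, 0) + F m * c)) / (-c) with htdef
    have ht : 0 < t := div_pos (by linarith) (by linarith)
    have hmemx : ((x, F x + t) : E × ℝ) ∈ s := by simp [hs, ht]
    have h2 := hφ _ hmemx
    rw [hφ_add x (F x + t), hφ_add m (F m)] at h2
    have hcne : (-c) ≠ 0 := by linarith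
    have htc' : t * (-c) = φ (x, 0) + F x * c - (φ (m, 0) + F m * c) := by
      rw [htdef]; exact div_mul_cancel₀ _ hcne
    nlinarith
  refine ⟨(-c)⁻¹ • (φ.comp (ContinuousLinearMap.inl ℝ E ℝ)), fun x => ?_⟩
  have hψx : ((-c)⁻¹ • (φ.comp (ContinuousLinearMap.inl ℝ E ℝ))) x = (-c)⁻¹ * φ (x, 0) := rfl
  have hψm : ((-c)⁻¹ • (φ.comp (ContinuousLinearMap.inl ℝ E ℝ))) m = (-c)⁻¹ * φ (m, 0) := rfl
  rw [hψx, hψm]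
  have hc' : (0 : ℝ) < -c := by linarith
  have h3 : φ (x, 0) - φ (m, 0) ≤ (-c) * (F x - F m) := by nlinarith [key x]
  have h4 := mul_le_mul_of_nonneg_left h3 (inv_nonneg.mpr hc'.le)
  rw [inv_mul_cancel_left₀ (ne_of_gt hc')] at h4
  rw [mul_sub] at h4
  linarith

/-- Gibbs' inequality: the KL divergence is nonnegative. -/
lemma integral_llr_nonneg' {W : Type*} [MeasurableSpace W] (μ ν : Measure W)
    [IsProbabilityMeasure μ] [IsProbabilityMeasure ν] (hμν : μ ≪ ν)
    (h : Integrable (llr μ ν) μ) : 0 ≤ ∫ x, llr μ ν x ∂μ := by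
  have hexp : (fun x ↦ Real.exp (- llr μ ν x)) =ᵐ[μ] fun x ↦ (ν.rnDeriv μ x).toReal :=
    exp_neg_llr hμν
  have hint : Integrable (fun x ↦ Real.exp (- llr μ ν x)) μ :=
    (Measure.integrable_toReal_rnDeriv).congr hexp.symm
  have hJ : Real.exp (∫ x, - llr μ ν x ∂μ) ≤ ∫ x, Real.exp (- llr μ ν x) ∂μ := by
    have := convexOn_exp.map_integral_le Real.continuous_exp.continuousOn isClosed_univ
      (Filter.Eventually.of_forall fun _ => Set.mem_univ _) h.neg
      (by exact hint)
    simpa [Function.comp] using this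
  have h1 : ∫ x, Real.exp (- llr μ ν x) ∂μ ≤ 1 := by
    rw [integral_congr_ae hexp]
    have h2 : ∫ x, (ν.rnDeriv μ x).toReal ∂μ ≤ (ν Set.univ).toReal := by
      rw [← setIntegral_univ]
      exact Measure.setIntegral_toReal_rnDeriv_le (measure_ne_top ν _)
    simpa using h2
  have h3 : Real.exp (∫ x, - llr μ ν x ∂μ) ≤ 1 := hJ.trans h1
  rw [Real.exp_le_one_iff, integral_neg] at h3
  linarith

/-- Donsker–Varadhan inequality (one direction). -/
lemma integral_le_llr_add_log {W : Type*} [MeasurableSpace W] (ρ ν : Measure W)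
    [IsProbabilityMeasure ρ] [IsProbabilityMeasure ν] (hρν : ρ ≪ ν)
    (g : W → ℝ) (hg : Integrable g ρ) (hllr : Integrable (llr ρ ν) ρ)
    (hexp : Integrable (fun x ↦ Real.exp (g x)) ν) :
    ∫ x, g x ∂ρ ≤ ∫ x, llr ρ ν x ∂ρ + Real.log (∫ x, Real.exp (g x) ∂ν) := by
  have hν' : IsProbabilityMeasure (ν.tilted g) := isProbabilityMeasure_tilted hexp
  have hac : ρ ≪ ν.tilted g := hρν.trans (absolutelyContinuous_tilted hexp)
  have h0 : 0 ≤ ∫ x, llr ρ (ν.tilted g) x ∂ρ :=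
    integral_llr_nonneg' _ _ hac (integrable_llr_tilted_right hρν hg hllr hexp)
  rw [integral_llr_tilted_right hρν hg hexp hllr] at h0
  linarith

end Aux

/-- PAC-Bayesian bound with a data-dependent prior (Lemma 3.1, after Rivasplata et al.).
`Q` is a Markov kernel from `Z^n` to `W` (the data-dependent prior), `A` is a measurable
`ℝ²`-valued function, `F` is convex, and
`ξ = ∫∫ exp (F (A D w)) Q(D)(dw) (P_Z^{⊗n})(dD)` is assumed finite (this is encoded by the
hypothesis `hξ`, since `ENNReal.ofReal ξ ≠ ∞`).  With probability at least `1 − δ` over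
`D ~ P_Z^{⊗n}`, simultaneously for every probability measure `ρ ≪ Q D` with `A (D, ·)`
`ρ`-integrable and finite KL divergence `KL(ρ‖Q D) = ∫ llr ρ (Q D) dρ`, we have
`F (∫ A(D,·) dρ) ≤ KL(ρ‖Q D) + log (ξ/δ)`. -/
theorem pac_bayes_data_dependent_prior
    {Z W : Type*} [MeasurableSpace Z] [MeasurableSpace W]
    (PZ : Measure Z) [IsProbabilityMeasure PZ]
    (n : ℕ) (hn : 1 ≤ n)
    (Q : ProbabilityTheory.Kernel (Fin n → Z) W) [ProbabilityTheory.IsMarkovKernel Q]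
    (A : (Fin n → Z) → W → ℝ × ℝ)
    (hA : Measurable (fun p : (Fin n → Z) × W => A p.1 p.2))
    (F : ℝ × ℝ → ℝ) (hF : ConvexOn ℝ Set.univ F)
    (ξ : ℝ)
    (hξ : ENNReal.ofReal ξ =
      ∫⁻ D, ∫⁻ w, ENNReal.ofReal (Real.exp (F (A D w))) ∂(Q D)
        ∂(Measure.pi fun _ : Fin n => PZ))
    (δ : ℝ) (hδ0 : 0 < δ) (hδ1 : δ < 1) :
    ENNReal.ofReal (1 - δ) ≤
      (Measure.pi fun _ : Fin n => PZ)
        {D | ∀ ρ : Measure W, IsProbabilityMeasure ρ →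
          ρ ≪ Q D →
          Integrable (fun w => A D w) ρ →
          Integrable (llr ρ (Q D)) ρ →
          F (∫ w, A D w ∂ρ) ≤ (∫ w, llr ρ (Q D) w ∂ρ) + Real.log (ξ / δ)} := by
  classical
  set μ : Measure (Fin n → Z) := Measure.pi fun _ : Fin n => PZ with hμdef
  haveI : IsProbabilityMeasure μ := by rw [hμdef]; infer_instance
  have hFc : Continuous F := by
    have h := hF.continuousOn isOpen_univ
    rwa [continuousOn_univ] at h
  have hf_meas : Measurable fun p : (Fin n → Z) × W =>
      ENNReal.ofReal (Real.exp (F (A p.1 p.2))) :=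
    ENNReal.measurable_ofReal.comp (Real.measurable_exp.comp (hFc.measurable.comp hA))
  set g : (Fin n → Z) → ENNReal :=
    fun D => ∫⁻ w, ENNReal.ofReal (Real.exp (F (A D w))) ∂(Q D) with hgdef
  have hg_meas : Measurable g := Measurable.lintegral_kernel_prod_right hf_meas
  -- ξ is positive
  have hgpos : ∀ D, g D ≠ 0 := by
    intro D h0
    have h0' : ∫⁻ w, ENNReal.ofReal (Real.exp (F (A D w))) ∂(Q D) = 0 := h0
    have hADm : Measurable (fun w => A D w) := hA.comp measurable_prodMk_left
    have hmeasD : Measurable fun w : W => ENNReal.ofReal (Real.exp (F (A D w))) :=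
      ENNReal.measurable_ofReal.comp (Real.measurable_exp.comp (hFc.measurable.comp hADm))
    rw [lintegral_eq_zero_iff hmeasD] at h0'
    rename' h0' => h0
    have h1 : ∀ᵐ w ∂(Q D), False := by
      filter_upwards [h0] with w hw
      simp only [Pi.zero_apply, ENNReal.ofReal_eq_zero] at hw
      exact absurd hw (Real.exp_pos _).not_ge
    have h2 : (Q D) {w | ¬ False} = 0 := ae_iff.mp h1
    simp only [not_false_iff, Set.setOf_true] at h2
    exact one_ne_zero ((measure_univ (μ := Q D)).symm.trans h2)
  have hξ0 : 0 < ξ := by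
    by_contra h
    push_neg at h
    have h0 : ENNReal.ofReal ξ = 0 := ENNReal.ofReal_eq_zero.mpr h
    rw [h0] at hξ
    have hg0 : ∀ᵐ D ∂μ, g D = 0 := (lintegral_eq_zero_iff hg_meas).mp hξ.symm
    haveI : (MeasureTheory.ae μ).NeBot := ae_neBot.mpr (IsProbabilityMeasure.ne_zero μ)
    obtain ⟨D, hD⟩ := hg0.exists
    exact hgpos D hD
  -- Markov's inequality
  set ε : ENNReal := ENNReal.ofReal (ξ / δ) with hεdef
  have hξδpos : 0 < ξ / δ := div_pos hξ0 hδ0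
  have hε0 : ε ≠ 0 := by
    simp [hεdef, ENNReal.ofReal_eq_zero, not_le, hξδpos]
  have hε_top : ε ≠ ⊤ := ENNReal.ofReal_ne_top
  have hmar : μ {D | ε ≤ g D} ≤ ENNReal.ofReal δ := by
    refine (meas_ge_le_lintegral_div hg_meas.aemeasurable hε0 hε_top).trans ?_
    rw [← hξ, hεdef, ENNReal.ofReal_div_of_pos hδ0]
    have ha0 : ENNReal.ofReal ξ ≠ 0 := by
      simp [ENNReal.ofReal_eq_zero, not_le, hξ0]
    have ha_top : ENNReal.ofReal ξ ≠ ⊤ := ENNReal.ofReal_ne_top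
    rw [div_eq_mul_inv, div_eq_mul_inv,
      ENNReal.mul_inv (Or.inl ha0) (Or.inl ha_top), inv_inv, ← mul_assoc,
      ENNReal.mul_inv_cancel ha0 ha_top, one_mul]
  have hS : ENNReal.ofReal (1 - δ) ≤ μ {D | g D < ε} := by
    have hcompl : {D | g D < ε} = {D | ε ≤ g D}ᶜ := by
      ext D; simp [not_le]
    rw [hcompl, measure_compl (measurableSet_le measurable_const hg_meas)
      (measure_ne_top _ _), measure_univ]
    have h1 : ENNReal.ofReal (1 - δ) = 1 - ENNReal.ofReal δ := by
      rw [ENNReal.ofReal_sub _ hδ0.le, ENNReal.ofReal_one]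
    rw [h1]
    exact tsub_le_tsub_left hmar 1
  refine hS.trans (measure_mono ?_)
  -- the pointwise (per-D) statement
  intro D hD
  simp only [Set.mem_setOf_eq] at hD ⊢
  intro ρ hρ hac hAint hllrint
  haveI := hρ
  set m : ℝ × ℝ := ∫ w, A D w ∂ρ with hmdef
  obtain ⟨ψ, hψ⟩ := exists_affine_minorant F hF hFc m
  set L : W → ℝ := fun w => F m + (ψ (A D w) - ψ m) with hLdef
  have hψA_int : Integrable (fun w => ψ (A D w)) ρ := ψ.integrable_comp hAint
  have hL_int : Integrable L ρ :=
    (integrable_const (F m)).add (hψA_int.sub (integrable_const (ψ m)))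
  have hL_int_eq : ∫ w, L w ∂ρ = F m := by
    have h1 : ∫ w, L w ∂ρ = ∫ w, (F m - ψ m) + ψ (A D w) ∂ρ := by
      apply integral_congr_ae
      filter_upwards with w
      rw [hLdef]; ring
    rw [h1, integral_add (integrable_const _) hψA_int, integral_const,
      ψ.integral_comp_comm hAint, ← hmdef]
    simp
  have hAD : Measurable fun w => A D w := hA.comp measurable_prodMk_left
  have hL_meas : Measurable L :=
    measurable_const.add ((ψ.continuous.measurable.comp hAD).sub measurable_const)
  have hLle : ∀ w, L w ≤ F (A D w) := fun w => hψ (A D w)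
  have hlint_le : ∫⁻ w, ENNReal.ofReal (Real.exp (L w)) ∂(Q D) ≤ g D :=
    lintegral_mono fun w => ENNReal.ofReal_le_ofReal (Real.exp_le_exp.mpr (hLle w))
  have hexpL_int : Integrable (fun w => Real.exp (L w)) (Q D) := by
    refine ⟨(Real.measurable_exp.comp hL_meas).aestronglyMeasurable, ?_⟩
    rw [hasFiniteIntegral_iff_ofReal (Filter.Eventually.of_forall fun w => (Real.exp_pos _).le)]
    exact lt_of_le_of_lt hlint_le (hD.trans_le le_top)
  have hDV := integral_le_llr_add_log ρ (Q D) hac L hL_int hllrint hexpL_int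
  rw [hL_int_eq] at hDV
  have h1 : ∫ w, Real.exp (L w) ∂(Q D) ≤ ξ / δ := by
    rw [integral_eq_lintegral_of_nonneg_ae
      (Filter.Eventually.of_forall fun w => (Real.exp_pos _).le) hexpL_int.1]
    calc (∫⁻ w, ENNReal.ofReal (Real.exp (L w)) ∂(Q D)).toReal
        ≤ ε.toReal := ENNReal.toReal_mono hε_top (hlint_le.trans hD.le)
      _ = ξ / δ := by rw [hεdef, ENNReal.toReal_ofReal hξδpos.le]
  have h2 : Real.log (∫ w, Real.exp (L w) ∂(Q D)) ≤ Real.log (ξ / δ) :=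
    Real.log_le_log (integral_exp_pos hexpL_int) h1
  calc F (∫ w, A D w ∂ρ) = F m := by rw [hmdef]
    _ ≤ (∫ w, llr ρ (Q D) w ∂ρ) + Real.log (∫ w, Real.exp (L w) ∂(Q D)) := hDV
    _ ≤ (∫ w, llr ρ (Q D) w ∂ρ) + Real.log (ξ / δ) := by linarith
end

section
/- Let Z and W be measurable spaces, let P_Z be a probability measure on Z, let n ≥ 1, let ℓ : W × Z → [0,∞) be measurable, and define the population loss L(w) = ∫ ℓ(w,z) P_Z(dz) and, for D = (z_1,…,z_n) ∈ Z^n, the empirical training loss L̂(w|D) = (1/n) Σ_{i=1}^n ℓ(w,z_i). Let Q : Z^n → P(W) be a Markov kernel, let β > 0, and set ξ = ∫∫ exp( β(L(w) − L̂(w|D)) ) Q(D)(dw) (P_Z^{⊗n})(dD), assumed finite. Then for every δ ∈ (0,1), with P_Z^{⊗n}-probability at least 1−δ over the draw of D, the following holds simultaneously for every probability measure ρ on W with ρ ≪ Q(D), L and L̂(·|D) ρ-integrable, and KL(ρ‖Q(D)) < ∞: ∫ L(w) ρ(dw) ≤ ∫ L̂(w|D) ρ(dw) + (1/β)·KL(ρ‖Q(D))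 + (1/β)·log(ξ/δ). -/
open MeasureTheory ProbabilityTheory Real

/-- Nonnegativity of the KL divergence. -/
lemma kl_nonneg_aux {α : Type*} [MeasurableSpace α] (ρ ν : Measure α)
    [IsProbabilityMeasure ρ] [IsProbabilityMeasure ν]
    (hρν : ρ ≪ ν) (h_int : Integrable (llr ρ ν) ρ) :
    0 ≤ ∫ x, llr ρ ν x ∂ρ := by
  set g : α → ℝ := fun x => (ν.rnDeriv ρ x).toReal with hg
  have hg_int : Integrable g ρ := Measure.integrable_toReal_rnDeriv
  have hg_le : ∫ x, g x ∂ρ ≤ 1 := by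
    have h := Measure.setIntegral_toReal_rnDeriv_le (μ := ν) (ν := ρ)
      (s := Set.univ) (measure_ne_top ν _)
    simpa using h
  have hle : (fun x => - llr ρ ν x) ≤ᵐ[ρ] fun x => g x - 1 := by
    filter_upwards [Measure.inv_rnDeriv hρν, Measure.rnDeriv_pos hρν,
      hρν.ae_le (Measure.rnDeriv_lt_top ρ ν)] with x hinv hpos hlt
    have ht_pos : 0 < (ρ.rnDeriv ν x).toReal := ENNReal.toReal_pos hpos.ne' hlt.ne
    have hgx : g x = ((ρ.rnDeriv ν x).toReal)⁻¹ := by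
      simp only [hg, ← hinv, Pi.inv_apply, ENNReal.toReal_inv]
    rw [llr_def, ← Real.log_inv, hgx]
    exact Real.log_le_sub_one_of_pos (inv_pos.2 ht_pos)
  have := integral_mono_ae h_int.neg (hg_int.sub (integrable_const 1)) hle
  simp only [Pi.neg_apply, Pi.sub_apply, integral_neg,
    integral_sub hg_int (integrable_const 1), integral_const, measure_univ,
    ENNReal.toReal_one, probReal_univ, smul_eq_mul, one_mul] at this
  linarith

/-- Donsker–Varadhan / change-of-measure inequality. -/
lemma dv_aux {α : Type*} [MeasurableSpace α] (ρ ν : Measure α)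
    [IsProbabilityMeasure ρ] [IsProbabilityMeasure ν]
    (hρν : ρ ≪ ν) (f : α → ℝ)
    (hfρ : Integrable f ρ) (hfν : Integrable (fun x => Real.exp (f x)) ν)
    (h_int : Integrable (llr ρ ν) ρ) :
    ∫ x, f x ∂ρ ≤ ∫ x, llr ρ ν x ∂ρ + Real.log (∫ x, Real.exp (f x) ∂ν) := by
  have hP : IsProbabilityMeasure (ν.tilted f) := isProbabilityMeasure_tilted hfν
  have hac : ρ ≪ ν.tilted f := hρν.trans (absolutelyContinuous_tilted hfν)
  have h0 : 0 ≤ ∫ x, llr ρ (ν.tilted f) x ∂ρ :=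
    kl_nonneg_aux ρ (ν.tilted f) hac
      (integrable_llr_tilted_right hρν hfρ h_int hfν)
  rw [integral_llr_tilted_right hρν hfρ hfν h_int] at h0
  linarith

/-- Information-risk-minimization form (equation (5)) of the PAC-Bayesian bound.
`ℓ : W × Z → [0,∞)` is a measurable loss, `L w = ∫ ℓ(w,z) dP_Z` the population loss,
`L̂(w|D) = (1/n) ∑ᵢ ℓ(w, Dᵢ)` the empirical loss, `Q` a Markov kernel (data-dependent
prior), `β > 0`, and `ξ = ∫∫ exp (β (L w − L̂(w|D))) Q(D)(dw) (P_Z^{⊗n})(dD)` is assumed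
finite (encoded by `hξ`).  With probability at least `1 − δ` over `D ~ P_Z^{⊗n}`,
simultaneously for every probability measure `ρ ≪ Q D` with `L` and `L̂(·|D)`
`ρ`-integrable and finite KL divergence `KL(ρ‖Q D) = ∫ llr ρ (Q D) dρ`,
`∫ L dρ ≤ ∫ L̂(·|D) dρ + β⁻¹ KL(ρ‖Q D) + β⁻¹ log (ξ/δ)`. -/
theorem pac_bayes_information_risk_minimization
    {Z W : Type*} [MeasurableSpace Z] [MeasurableSpace W]
    (PZ : Measure Z) [IsProbabilityMeasure PZ]
    (n : ℕ) (hn : 1 ≤ n)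
    (ℓ : W → Z → ℝ)
    (hℓ : Measurable (fun p : W × Z => ℓ p.1 p.2))
    (hℓ0 : ∀ w z, 0 ≤ ℓ w z)
    (Q : ProbabilityTheory.Kernel (Fin n → Z) W) [ProbabilityTheory.IsMarkovKernel Q]
    (β : ℝ) (hβ : 0 < β)
    (ξ : ℝ)
    (hξ : ENNReal.ofReal ξ =
      ∫⁻ D, ∫⁻ w, ENNReal.ofReal
          (Real.exp (β * ((∫ z, ℓ w z ∂PZ) - (n : ℝ)⁻¹ * ∑ i, ℓ w (D i)))) ∂(Q D)
        ∂(Measure.pi fun _ : Fin n => PZ))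
    (δ : ℝ) (hδ0 : 0 < δ) (hδ1 : δ < 1) :
    ENNReal.ofReal (1 - δ) ≤
      (Measure.pi fun _ : Fin n => PZ)
        {D | ∀ ρ : Measure W, IsProbabilityMeasure ρ →
          ρ ≪ Q D →
          Integrable (fun w => ∫ z, ℓ w z ∂PZ) ρ →
          Integrable (fun w => (n : ℝ)⁻¹ * ∑ i, ℓ w (D i)) ρ →
          Integrable (llr ρ (Q D)) ρ →
          ∫ w, (∫ z, ℓ w z ∂PZ) ∂ρ ≤
            (∫ w, (n : ℝ)⁻¹ * ∑ i, ℓ w (D i) ∂ρ)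
              + β⁻¹ * (∫ w, llr ρ (Q D) w ∂ρ) + β⁻¹ * Real.log (ξ / δ)} := by
  set μ : Measure (Fin n → Z) := Measure.pi fun _ : Fin n => PZ with hμ
  have hμP : IsProbabilityMeasure μ := by infer_instance
  -- the function F D w and its measurability
  set L : W → ℝ := fun w => ∫ z, ℓ w z ∂PZ with hL
  have hL_meas : Measurable L := hℓ.stronglyMeasurable.integral_prod_right'.measurable
  set F : (Fin n → Z) → W → ℝ :=
    fun D w => β * (L w - (n : ℝ)⁻¹ * ∑ i, ℓ w (D i)) with hF
  have hF_meas : Measurable (Function.uncurry F) := by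
    apply Measurable.const_mul
    apply Measurable.sub
    · exact hL_meas.comp measurable_snd
    · apply Measurable.const_mul
      apply Finset.measurable_sum
      intro i _
      exact hℓ.comp (measurable_snd.prodMk ((measurable_pi_apply i).comp measurable_fst))
  have hmeas2 : Measurable fun p : (Fin n → Z) × W =>
      ENNReal.ofReal (Real.exp (F p.1 p.2)) :=
    (measurable_exp.comp hF_meas).ennreal_ofReal
  set G : (Fin n → Z) → ENNReal :=
    fun D => ∫⁻ w, ENNReal.ofReal (Real.exp (F D w)) ∂(Q D) with hG
  have hG_meas : Measurable G := hmeas2.lintegral_kernel_prod_right'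
  have hFD : ∀ D, Measurable (F D) := fun D =>
    Measurable.of_uncurry_left (f := F) hF_meas
  have hm3 : ∀ D, Measurable fun w => ENNReal.ofReal (Real.exp (F D w)) := fun D =>
    Measurable.of_uncurry_left
      (f := fun D w => ENNReal.ofReal (Real.exp (F D w))) hmeas2
  have hξ' : ∫⁻ D, G D ∂μ = ENNReal.ofReal ξ := hξ.symm
  -- positivity of ξ
  have hξpos : 0 < ξ := by
    refine ENNReal.ofReal_pos.mp ?_
    rw [← hξ', lintegral_pos_iff_support hG_meas]
    have hsupp : Function.support G = Set.univ := by
      ext D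
      simp only [Function.mem_support, Set.mem_univ, iff_true]
      have hpos : 0 < G D := by
        show 0 < ∫⁻ w, ENNReal.ofReal (Real.exp (F D w)) ∂(Q D)
        rw [lintegral_pos_iff_support (hm3 D)]
        have hs2 : (Function.support fun w => ENNReal.ofReal (Real.exp (F D w)))
            = Set.univ := by
          ext w
          simp [Function.mem_support, ENNReal.ofReal_eq_zero, not_le, Real.exp_pos]
        rw [hs2]
        simp
      exact hpos.ne'
    rw [hsupp]
    simp
  have hc0 : 0 < ξ / δ := div_pos hξpos hδ0
  set c : ENNReal := ENNReal.ofReal (ξ / δ) with hc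
  -- Markov's inequality
  have hmarkov : μ {D | c ≤ G D} ≤ ENNReal.ofReal δ := by
    have h := meas_ge_le_lintegral_div (μ := μ) hG_meas.aemeasurable
      (ε := c) (by simp [hc, ENNReal.ofReal_eq_zero, not_le, hc0]) (by simp [hc])
    rw [hξ'] at h
    refine h.trans_eq ?_
    rw [hc, ← ENNReal.ofReal_div_of_pos hc0]
    congr 1
    field_simp
  -- the good event
  have hmeas_ge : MeasurableSet {D | c ≤ G D} := measurableSet_le measurable_const hG_meas
  have hE : ENNReal.ofReal (1 - δ) ≤ μ {D | G D < c} := by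
    have h1 : {D | G D < c} = {D | c ≤ G D}ᶜ := by
      ext D; simp [not_le]
    rw [h1, measure_compl hmeas_ge (measure_ne_top _ _), measure_univ]
    rw [ENNReal.ofReal_sub _ hδ0.le, ENNReal.ofReal_one]
    exact tsub_le_tsub_left hmarkov 1
  refine hE.trans (measure_mono ?_)
  -- subset inclusion: on the good event, the PAC-Bayes bound holds
  intro D hD ρ hρP hac hL_int hLhat_int hllr_int
  have hQP : IsProbabilityMeasure (Q D) := by infer_instance
  have hGD_lt : G D < ⊤ := hD.trans_le le_top
  -- integrability of exp (F D) w.r.t. Q D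
  have hexp_int : Integrable (fun w => Real.exp (F D w)) (Q D) := by
    have h := integrable_toReal_of_lintegral_ne_top (hm3 D).aemeasurable hGD_lt.ne
    refine h.congr (ae_of_all _ fun w => ?_)
    exact ENNReal.toReal_ofReal (Real.exp_pos _).le
  -- integrability of F D w.r.t. ρ
  have hFρ : Integrable (F D) ρ := (hL_int.sub hLhat_int).const_mul β
  -- Donsker–Varadhan
  have hDV := dv_aux ρ (Q D) hac (F D) hFρ hexp_int hllr_int
  -- bound the log term
  have hint_eq : ∫ w, Real.exp (F D w) ∂(Q D) = (G D).toReal := by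
    rw [integral_eq_lintegral_of_nonneg_ae (ae_of_all _ fun w => (Real.exp_pos _).le)
      (measurable_exp.comp (hFD D)).aestronglyMeasurable]
  have hint_pos : 0 < ∫ w, Real.exp (F D w) ∂(Q D) := integral_exp_pos hexp_int
  have hlog : Real.log (∫ w, Real.exp (F D w) ∂(Q D)) ≤ Real.log (ξ / δ) := by
    apply Real.log_le_log hint_pos
    rw [hint_eq]
    exact ENNReal.toReal_le_of_le_ofReal hc0.le hD.le
  -- compute ∫ F D dρ
  have hint_F : ∫ w, F D w ∂ρ =
      β * ((∫ w, L w ∂ρ) - ∫ w, (n : ℝ)⁻¹ * ∑ i, ℓ w (D i) ∂ρ) := by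
    simp only [hF]
    rw [integral_const_mul, integral_sub hL_int hLhat_int]
  rw [hint_F] at hDV
  set A := ∫ w, L w ∂ρ
  set B := ∫ w, (n : ℝ)⁻¹ * ∑ i, ℓ w (D i) ∂ρ
  set K := ∫ w, llr ρ (Q D) w ∂ρ
  have hkey : β * (A - B) ≤ K + Real.log (ξ / δ) := by linarith
  have h2 : A - B ≤ (K + Real.log (ξ / δ)) / β :=
    (le_div_iff₀ hβ).2 (by linarith)
  rw [div_eq_inv_mul, mul_add] at h2
  show A ≤ B + β⁻¹ * K + β⁻¹ * Real.log (ξ / δ)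
  linarith
end

section
/- Let Z and W be measurable spaces, let P_Z be a probability measure on Z, and let n > m ≥ 1. Let P_{D,D_e} be the joint distribution of (D, D_e) where D = (Z_1,…,Z_n) ~ P_Z^{⊗n} and D_e is a uniformly selected size-m sub-tuple of D. Let p : Z × W → (0,∞) be a measurable likelihood model, and write log p(D_e|w) = Σ_{z ∈ D_e} log p(z|w). Let P_{W|D} : Z^n → P(W) be a Markov kernel (the learning algorithm) and let κ : W × Z^n × Z^m → P(W) be a Markov kernel (the unlearning algorithm, mapping a learned model w_l, the data D, and the unlearning set D_e to an unlearned model). Define EUBO(ρ, P_{W|D}(D)) = ∫ log p(D_e|w) ρ(dw) + KL(ρ‖P_{W|D}(D)) for a probability measure ρ on W, and set ξ̄ = ∫∫ exp( −m ∫ log p(z|w) P_Z(dz) − log p(D_e|w) ) P_{W|D}(D)(dw) P_{D,D_e}(d(D,D_e)), assumed finite. Then for every δ ∈ (0,1), with P_{D,D_e}-probability at least 1−δ over the draw of (D, D_e), the following holds simultaneously for every unlearning kernel κ (under the integrability and absolute-continuity conditions κ(w_l,D,D_e) ≪ P_{W|D}(D), with finite KL, for P_{W|D}(D)-a.e. w_l):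 ∫∫ ( −∫ log p(z|w) P_Z(dz) ) κ(w_l,D,D_e)(dw) P_{W|D}(D)(dw_l) ≤ (1/m) ∫ EUBO(κ(w_l,D,D_e), P_{W|D}(D)) P_{W|D}(D)(dw_l) + (1/m) log(ξ̄/δ). -/
open MeasureTheory ProbabilityTheory
open scoped ENNReal NNReal

open Real in
lemma aux_integral_llr_nonneg {W : Type*} [MeasurableSpace W] {μ ν : Measure W}
    [IsProbabilityMeasure μ] [IsProbabilityMeasure ν] (hμν : μ ≪ ν)
    (h : Integrable (llr μ ν) μ) : 0 ≤ ∫ x, llr μ ν x ∂μ := by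
  have hexp_eq : (fun x => Real.exp (-llr μ ν x)) =ᵐ[μ] fun x => (ν.rnDeriv μ x).toReal :=
    exp_neg_llr hμν
  have hint_exp : Integrable (fun x => Real.exp (-llr μ ν x)) μ :=
    Measure.integrable_toReal_rnDeriv.congr hexp_eq.symm
  have jensen : Real.exp (∫ x, -llr μ ν x ∂μ) ≤ ∫ x, Real.exp (-llr μ ν x) ∂μ := by
    have := convexOn_exp.map_integral_le (f := fun x => -llr μ ν x)
      continuous_exp.continuousOn isClosed_univ
      (Filter.Eventually.of_forall fun x => Set.mem_univ _) h.neg ?_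
    · exact this
    · exact hint_exp
  have hle1 : ∫ x, Real.exp (-llr μ ν x) ∂μ ≤ 1 := by
    rw [integral_congr_ae hexp_eq, Measure.integral_toReal_rnDeriv']
    have h1 : (ν Set.univ).toReal = 1 := by simp
    have h2 : 0 ≤ (ν.singularPart μ Set.univ).toReal := ENNReal.toReal_nonneg
    simp only [measureReal_def] at *
    linarith
  have hfin := jensen.trans hle1
  rw [Real.exp_le_one_iff, integral_neg, neg_nonpos] at hfin
  exact hfin

open Real in
lemma aux_dv {W : Type*} [MeasurableSpace W] (μ ρ : Measure W)
    [IsProbabilityMeasure μ] [IsProbabilityMeasure ρ] {f : W → ℝ}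
    (hρμ : ρ ≪ μ) (hllr : Integrable (llr ρ μ) ρ) (hf : Integrable f ρ)
    (hexp : Integrable (fun w => Real.exp (f w)) μ) :
    ∫ w, f w ∂ρ ≤ (∫ w, llr ρ μ w ∂ρ) + Real.log (∫ w, Real.exp (f w) ∂μ) := by
  haveI : IsProbabilityMeasure (μ.tilted f) := isProbabilityMeasure_tilted hexp
  have hρν : ρ ≪ μ.tilted f := hρμ.trans (absolutelyContinuous_tilted hexp)
  have h0 := aux_integral_llr_nonneg hρν (integrable_llr_tilted_right hρμ hf hllr hexp)
  rw [integral_llr_tilted_right hρμ hf hexp hllr] at h0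
  linarith



/-- Corollary 4.1: the EUBO criterion of variational unlearning is a PAC-Bayesian upper
bound on the test log-loss of the unlearned model.

`PDDe` is the joint law of `(D, D_e)`, where `D ~ P_Z^{⊗n}` and `D_e` is a uniformly
selected size-`m` sub-tuple of `D` (selected through a uniformly random strictly
monotone index map `ι : Fin m → Fin n`).  `PWD` is the learning algorithm (a Markov
kernel), `κ` the unlearning algorithm (a Markov kernel in the learned model `w_l`, the
data `D` and the unlearning set `D_e`), and
`EUBO(ρ, PWD D) = ∫ log p(D_e|w) dρ + KL(ρ‖PWD D)` where
`log p(D_e|w) = ∑_{z ∈ D_e} log p(z|w)` and `KL(ρ‖μ) = ∫ llr ρ μ dρ`.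
`ξ̄ = ∫∫ exp (−m ∫ log p(z|w) dP_Z − log p(D_e|w)) (PWD D)(dw) dP_{D,D_e}` is assumed
finite (encoded by `hξ`).  Then with probability at least `1 − δ` over `(D, D_e)`,
simultaneously for every unlearning kernel `κ` (under the stated absolute-continuity and
integrability conditions, holding for `PWD D`-a.e. `w_l`), the average test log-loss of
the unlearned model is bounded by `(1/m) ∫ EUBO(κ(w_l,D,D_e), PWD D) (PWD D)(dw_l)
+ (1/m) log (ξ̄/δ)`. -/

theorem eubo_pac_bayes_unlearning
    {Z W : Type*} [MeasurableSpace Z] [MeasurableSpace W]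
    (PZ : Measure Z) [IsProbabilityMeasure PZ]
    (n m : ℕ) (hm : 1 ≤ m) (hmn : m < n)
    (p : Z → W → ℝ)
    (hp_pos : ∀ z w, 0 < p z w)
    (hp_meas : Measurable (fun q : Z × W => p q.1 q.2))
    (hp_int : ∀ w : W, Integrable (fun z => Real.log (p z w)) PZ)
    (PWD : ProbabilityTheory.Kernel (Fin n → Z) W)
    [ProbabilityTheory.IsMarkovKernel PWD]
    (PDDe : Measure ((Fin n → Z) × (Fin m → Z)))
    (hPDDe : PDDe =
      ((Measure.pi fun _ : Fin n => PZ).prod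
          (uniformOn {ι : Fin m → Fin n | StrictMono ι})).map
        (fun q => (q.1, fun j => q.1 (q.2 j))))
    (ξ : ℝ)
    (hξ : ENNReal.ofReal ξ =
      ∫⁻ r, ∫⁻ w, ENNReal.ofReal (Real.exp
          (-(m : ℝ) * (∫ z, Real.log (p z w) ∂PZ) - ∑ j, Real.log (p (r.2 j) w)))
        ∂(PWD r.1) ∂PDDe)
    (δ : ℝ) (hδ0 : 0 < δ) (hδ1 : δ < 1) :
    ENNReal.ofReal (1 - δ) ≤
      PDDe {r | ∀ κ : ProbabilityTheory.Kernel (W × (Fin n → Z) × (Fin m → Z)) W,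
        ProbabilityTheory.IsMarkovKernel κ →
        (∀ᵐ wl ∂(PWD r.1), κ (wl, r.1, r.2) ≪ PWD r.1) →
        (∀ᵐ wl ∂(PWD r.1),
          Integrable (llr (κ (wl, r.1, r.2)) (PWD r.1)) (κ (wl, r.1, r.2))) →
        (∀ᵐ wl ∂(PWD r.1),
          Integrable (fun w => ∫ z, Real.log (p z w) ∂PZ) (κ (wl, r.1, r.2)) ∧
          Integrable (fun w => ∑ j, Real.log (p (r.2 j) w)) (κ (wl, r.1, r.2))) →
        Integrable (fun wl =>
            ∫ w, -(∫ z, Real.log (p z w) ∂PZ) ∂(κ (wl, r.1, r.2))) (PWD r.1) →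
        Integrable (fun wl =>
            (∫ w, ∑ j, Real.log (p (r.2 j) w) ∂(κ (wl, r.1, r.2)))
              + ∫ w, llr (κ (wl, r.1, r.2)) (PWD r.1) w ∂(κ (wl, r.1, r.2)))
          (PWD r.1) →
        ∫ wl, (∫ w, -(∫ z, Real.log (p z w) ∂PZ) ∂(κ (wl, r.1, r.2))) ∂(PWD r.1) ≤
          (m : ℝ)⁻¹ *
            (∫ wl, ((∫ w, ∑ j, Real.log (p (r.2 j) w) ∂(κ (wl, r.1, r.2)))
                + ∫ w, llr (κ (wl, r.1, r.2)) (PWD r.1) w ∂(κ (wl, r.1, r.2)))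
              ∂(PWD r.1))
            + (m : ℝ)⁻¹ * Real.log (ξ / δ)} := by
  classical
  have hm0 : (0 : ℝ) < m := by exact_mod_cast hm
  -- measurability of the inner function
  have hA_meas : Measurable fun w : W => ∫ z, Real.log (p z w) ∂PZ := by
    have : StronglyMeasurable fun q : W × Z => Real.log (p q.2 q.1) :=
      (Real.measurable_log.comp (hp_meas.comp measurable_swap)).stronglyMeasurable
    exact this.integral_prod_right'.measurable
  have hB_meas : Measurable fun q : ((Fin n → Z) × (Fin m → Z)) × W =>
      ∑ j, Real.log (p (q.1.2 j) q.2) := by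
    refine Finset.measurable_sum _ fun j _ => ?_
    have hpair : Measurable fun q : ((Fin n → Z) × (Fin m → Z)) × W => ((q.1.2 j), q.2) :=
      ((measurable_pi_apply j).comp (measurable_snd.comp measurable_fst)).prodMk measurable_snd
    exact (hp_meas.comp hpair).log
  have hg_meas : Measurable fun q : ((Fin n → Z) × (Fin m → Z)) × W =>
      ENNReal.ofReal (Real.exp
        (-(m : ℝ) * (∫ z, Real.log (p z q.2) ∂PZ) - ∑ j, Real.log (p (q.1.2 j) q.2))) := by
    refine ENNReal.measurable_ofReal.comp (Real.measurable_exp.comp ?_)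
    exact (((hA_meas.comp measurable_snd).const_mul _).sub hB_meas)
  set F : ((Fin n → Z) × (Fin m → Z)) → ℝ≥0∞ := fun r =>
    ∫⁻ w, ENNReal.ofReal (Real.exp
      (-(m : ℝ) * (∫ z, Real.log (p z w) ∂PZ) - ∑ j, Real.log (p (r.2 j) w)))
      ∂(PWD r.1) with hF_def
  have hF_meas : Measurable F := by
    have := hg_meas.lintegral_kernel_prod_right'
      (κ := PWD.comap Prod.fst measurable_fst)
    simpa only [Kernel.comap_apply] using this
  -- PDDe is a probability measure
  haveI hPDDe_prob : IsProbabilityMeasure PDDe := by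
    rw [hPDDe]
    have hSfin : ({ι : Fin m → Fin n | StrictMono ι}).Finite := Set.toFinite _
    have hSne : ({ι : Fin m → Fin n | StrictMono ι}).Nonempty :=
      ⟨Fin.castLE hmn.le, Fin.strictMono_castLE hmn.le⟩
    haveI := uniformOn_isProbabilityMeasure hSfin hSne
    have heval : Measurable fun x : (Fin n → Z) × Fin n => x.1 x.2 :=
      measurable_from_prod_countable_left fun i => measurable_pi_apply i
    have hmap : Measurable fun q : (Fin n → Z) × (Fin m → Fin n) =>
        (q.1, fun j => q.1 (q.2 j)) := by
      refine measurable_fst.prodMk (measurable_pi_lambda _ fun j => ?_)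
      exact heval.comp (measurable_fst.prodMk
        ((measurable_pi_apply j).comp measurable_snd))
    exact Measure.isProbabilityMeasure_map hmap.aemeasurable
  -- positivity of ξ
  have hξ_lint_pos : 0 < ∫⁻ r, F r ∂PDDe := by
    rw [lintegral_pos_iff_support hF_meas]
    have : Function.support F = Set.univ := by
      ext r
      simp only [Function.mem_support, Set.mem_univ, iff_true]
      intro h0
      have hmeas' : Measurable fun w : W => ENNReal.ofReal (Real.exp
          (-(m : ℝ) * (∫ z, Real.log (p z w) ∂PZ) - ∑ j, Real.log (p (r.2 j) w))) := by
        refine ENNReal.measurable_ofReal.comp (Real.measurable_exp.comp ?_)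
        refine (hA_meas.const_mul _).sub (Finset.measurable_sum _ fun j _ => ?_)
        have hpair : Measurable fun w : W => ((r.2 j : Z), w) :=
          measurable_const.prodMk measurable_id
        exact (hp_meas.comp hpair).log
      have h0' := (lintegral_eq_zero_iff hmeas').mp h0
      obtain ⟨w, hw⟩ := h0'.exists
      simp only [Pi.zero_apply, ENNReal.ofReal_eq_zero] at hw
      exact absurd hw (not_le.mpr (Real.exp_pos _))
    rw [this]
    simp
  have hξ_pos : 0 < ξ := by
    by_contra h
    push_neg at h
    rw [← hξ] at hξ_lint_pos
    simp [ENNReal.ofReal_eq_zero.mpr h] at hξ_lint_pos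
  have hξδ_pos : 0 < ξ / δ := div_pos hξ_pos hδ0
  set c : ℝ≥0∞ := ENNReal.ofReal (ξ / δ) with hc_def
  have hc0 : c ≠ 0 := (ENNReal.ofReal_pos.mpr hξδ_pos).ne'
  have hc_top : c ≠ ⊤ := ENNReal.ofReal_ne_top
  -- Markov inequality
  have hmarkov : PDDe {r | c ≤ F r} ≤ ENNReal.ofReal δ := by
    have h1 : c * PDDe {r | c ≤ F r} ≤ ∫⁻ r, F r ∂PDDe :=
      mul_meas_ge_le_lintegral₀ hF_meas.aemeasurable c
    have h2 : (∫⁻ r, F r ∂PDDe) = c * ENNReal.ofReal δ := by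
      rw [← hξ, hc_def, ENNReal.ofReal_div_of_pos hδ0,
        ENNReal.div_mul_cancel (by simpa using hδ0) ENNReal.ofReal_ne_top]
    rw [h2] at h1
    exact (ENNReal.mul_le_mul_iff_right hc0 hc_top).mp h1
  have hEmeas : MeasurableSet {r | F r < c} := measurableSet_lt hF_meas measurable_const
  have hE_ge : ENNReal.ofReal (1 - δ) ≤ PDDe {r | F r < c} := by
    have hcompl : {r | c ≤ F r} = {r | F r < c}ᶜ := by
      ext r; simp [not_lt]
    calc ENNReal.ofReal (1 - δ) = 1 - ENNReal.ofReal δ := by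
          rw [ENNReal.ofReal_sub _ hδ0.le, ENNReal.ofReal_one]
      _ ≤ 1 - PDDe {r | c ≤ F r} := tsub_le_tsub_left hmarkov 1
      _ = 1 - (1 - PDDe {r | F r < c}) := by
          rw [hcompl, prob_compl_eq_one_sub hEmeas]
      _ = PDDe {r | F r < c} := ENNReal.sub_sub_cancel ENNReal.one_ne_top prob_le_one
  refine le_trans hE_ge (measure_mono ?_)
  -- the good event is contained in the target event
  intro r hr
  simp only [Set.mem_setOf_eq] at hr ⊢
  intro κ hκM h_ac h_llr h_int hI1 hI2
  set μ : Measure W := PWD r.1 with hμ_def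
  haveI : IsProbabilityMeasure μ := inferInstance
  set f : W → ℝ := fun w =>
    -(m : ℝ) * (∫ z, Real.log (p z w) ∂PZ) - ∑ j, Real.log (p (r.2 j) w) with hf_def
  have hf_meas : Measurable f := by
    refine (Measurable.sub ?_ ?_)
    · exact hA_meas.const_mul _
    · refine Finset.measurable_sum _ fun j _ => ?_
      have hpair : Measurable fun w : W => ((r.2 j : Z), w) :=
        measurable_const.prodMk measurable_id
      exact (hp_meas.comp hpair).log
  have hFr_lt_top : F r < ⊤ := hr.trans_le le_top
  have hexp_int : Integrable (fun w => Real.exp (f w)) μ := by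
    refine ⟨(Real.measurable_exp.comp hf_meas).aestronglyMeasurable, ?_⟩
    rw [hasFiniteIntegral_iff_ofReal (Filter.Eventually.of_forall fun w => (Real.exp_pos _).le)]
    exact hFr_lt_top
  have h_int_eq : ∫ w, Real.exp (f w) ∂μ = (F r).toReal := by
    rw [integral_eq_lintegral_of_nonneg_ae
      (Filter.Eventually.of_forall fun w => (Real.exp_pos _).le)
      (Real.measurable_exp.comp hf_meas).aestronglyMeasurable]
  have h_le : ∫ w, Real.exp (f w) ∂μ ≤ ξ / δ := by
    rw [h_int_eq]
    exact ENNReal.toReal_le_of_le_ofReal hξδ_pos.le hr.le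
  have h_log_le : Real.log (∫ w, Real.exp (f w) ∂μ) ≤ Real.log (ξ / δ) :=
    Real.log_le_log (integral_exp_pos hexp_int) h_le
  -- pointwise (a.e. in wl) Donsker--Varadhan bound
  have key : ∀ᵐ wl ∂μ,
      (m : ℝ) * (∫ w, -(∫ z, Real.log (p z w) ∂PZ) ∂(κ (wl, r.1, r.2))) ≤
        ((∫ w, ∑ j, Real.log (p (r.2 j) w) ∂(κ (wl, r.1, r.2)))
          + ∫ w, llr (κ (wl, r.1, r.2)) μ w ∂(κ (wl, r.1, r.2))) + Real.log (ξ / δ) := by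
    filter_upwards [h_ac, h_llr, h_int] with wl hac hllr hint
    obtain ⟨hiA, hiB⟩ := hint
    set ρ : Measure W := κ (wl, r.1, r.2) with hρ_def
    haveI : IsProbabilityMeasure ρ := hκM.isProbabilityMeasure _
    have hf_int : Integrable f ρ := (hiA.const_mul _).sub hiB
    have hdv := aux_dv μ ρ hac hllr hf_int hexp_int
    have hsum : ∫ w, f w ∂ρ =
        -(m : ℝ) * (∫ w, (∫ z, Real.log (p z w) ∂PZ) ∂ρ)
          - ∫ w, ∑ j, Real.log (p (r.2 j) w) ∂ρ := by
      rw [hf_def]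
      rw [integral_sub (hiA.const_mul _) hiB, integral_const_mul]
    have hnegA : ∫ w, -(∫ z, Real.log (p z w) ∂PZ) ∂ρ
        = -∫ w, (∫ z, Real.log (p z w) ∂PZ) ∂ρ := integral_neg _
    rw [hsum] at hdv
    rw [hnegA]
    nlinarith [h_log_le]
  -- integrate over wl
  have hmono := integral_mono_ae (μ := μ)
    (hI1.const_mul (m : ℝ))
    (hI2.add (integrable_const (Real.log (ξ / δ)))) key
  rw [integral_const_mul] at hmono
  simp only [Pi.add_apply] at hmono
  simp only [integral_add hI2 (integrable_const (Real.log (ξ / δ))), integral_const,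
    measure_univ, probReal_univ, ENNReal.toReal_one, one_smul] at hmono
  have hgoal :
      ∫ wl, (∫ w, -(∫ z, Real.log (p z w) ∂PZ) ∂(κ (wl, r.1, r.2))) ∂μ ≤
      (m : ℝ)⁻¹ * ((∫ wl, ((∫ w, ∑ j, Real.log (p (r.2 j) w) ∂(κ (wl, r.1, r.2)))
          + ∫ w, llr (κ (wl, r.1, r.2)) μ w ∂(κ (wl, r.1, r.2))) ∂μ) + Real.log (ξ / δ)) := by
    have h2 := mul_le_mul_of_nonneg_left hmono (inv_nonneg.mpr hm0.le)
    rw [← mul_assoc, inv_mul_cancel₀ hm0.ne', one_mul] at h2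
    exact h2
  calc ∫ wl, (∫ w, -(∫ z, Real.log (p z w) ∂PZ) ∂(κ (wl, r.1, r.2))) ∂μ
      ≤ (m : ℝ)⁻¹ * ((∫ wl, ((∫ w, ∑ j, Real.log (p (r.2 j) w) ∂(κ (wl, r.1, r.2)))
          + ∫ w, llr (κ (wl, r.1, r.2)) μ w ∂(κ (wl, r.1, r.2))) ∂μ) + Real.log (ξ / δ)) :=
        hgoal
    _ = (m : ℝ)⁻¹ * (∫ wl, ((∫ w, ∑ j, Real.log (p (r.2 j) w) ∂(κ (wl, r.1, r.2)))
          + ∫ w, llr (κ (wl, r.1, r.2)) μ w ∂(κ (wl, r.1, r.2))) ∂μ)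
          + (m : ℝ)⁻¹ * Real.log (ξ / δ) := by ring
end

section
/- Let W be a measurable space, let π be a probability measure on W (the Bayesian prior), and let p : Z × W → (0,∞) be a measurable likelihood with Z a measurable space. Fix a data tuple D = (z_1,…,z_n) ∈ Z^n, an unlearning sub-tuple D_e of size m, and the remaining tuple D_r = D ∖ D_e. Assume the normalizing constants C = ∫ Π_{z∈D} p(z|w) π(dw) and C_r = ∫ Π_{z∈D_r} p(z|w) π(dw) are finite and positive, and define the Bayesian posteriors P_{W|D} and P_{W|D_r} as the probability measures with densities (Π_{z∈D} p(z|w))/C and (Π_{z∈D_r} p(z|w))/C_r with respect to π. Then for every probability measure q on W with q ≪ π, finite KL(q‖P_{W|D}), and ∫ |Σ_{z∈D_e} log p(z|w)| q(dw) < ∞: KL(q‖P_{W|D_r}) = ∫ Σ_{z∈D_e} log p(z|w) q(dw) + KL(q‖P_{W|D}) + log(C_r/C). In particular, since log(C_r/C) does not depend on q, minimizing KL(q‖P_{W|D_r}) over q is equivalent to minimizing the Evidence Upper BOund EUBO(q, P_{W|D}) = ∫ Σ_{z∈D_e} log p(z|w) q(dw) + KL(q‖P_{W|D}). -/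
open MeasureTheory

open scoped ENNReal
set_option maxHeartbeats 1000000

lemma prod_split_aux {Z W : Type*} (p : Z → W → ℝ) {n m : ℕ} (D : Fin n → Z)
    (ι : Fin m → Fin n) (hι : StrictMono ι) (w : W) :
    (∏ i, p (D i) w) =
      (∏ j, p (D (ι j)) w) * (∏ i, if h : ∃ j, ι j = i then 1 else p (D i) w) := by
  classical
  have hmask : (fun i : Fin n => if h : ∃ j, ι j = i then 1 else p (D i) w)
      = fun i => if i ∈ Finset.image ι Finset.univ then 1 else p (D i) w := by
    funext i
    simp only [dite_eq_ite, Finset.mem_image, Finset.mem_univ, true_and]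
  rw [hmask]
  rw [Finset.prod_ite, Finset.prod_const_one, one_mul]
  have h1 : (∏ j, p (D (ι j)) w) = ∏ i ∈ Finset.image ι Finset.univ, p (D i) w :=
    (Finset.prod_image (g := ι) (f := fun i => p (D i) w)
      (fun a _ b _ h => hι.injective h)).symm
  rw [h1]
  rw [← Finset.prod_filter_mul_prod_filter_not Finset.univ (· ∈ Finset.image ι Finset.univ)]
  congr 1
  rw [Finset.filter_mem_eq_inter, Finset.univ_inter]


/-- The identity underlying the equivalence between variational unlearning (problem (6))
and EUBO minimization (problem (7)).  `π` is the Bayesian prior, `p` a positive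
likelihood, `D = (z₁,…,zₙ)` a fixed data tuple, the unlearning sub-tuple `D_e` is
selected by the strictly monotone index map `ι : Fin m → Fin n`, and
`D_r = D ∖ D_e` consists of the entries of `D` with index outside the range of `ι`.
With `C = ∫ ∏_{z ∈ D} p(z|w) dπ` and `C_r = ∫ ∏_{z ∈ D_r} p(z|w) dπ` finite and
positive, the posteriors `P_{W|D}` and `P_{W|D_r}` have densities
`(∏_{z∈D} p(z|w))/C` and `(∏_{z∈D_r} p(z|w))/C_r` with respect to `π`.  Then for every
probability measure `q ≪ π` with finite `KL(q‖P_{W|D}) = ∫ llr q P_{W|D} dq` and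
integrable `∑_{z∈D_e} log p(z|w)`:
`KL(q‖P_{W|D_r}) = ∫ ∑_{z∈D_e} log p(z|w) dq + KL(q‖P_{W|D}) + log (C_r/C)`,
so minimizing `KL(q‖P_{W|D_r})` over `q` is equivalent to minimizing the EUBO
`∫ ∑_{z∈D_e} log p(z|w) dq + KL(q‖P_{W|D})`. -/
theorem kl_retrained_eq_eubo_add_const
    {Z W : Type*} [MeasurableSpace Z] [MeasurableSpace W]
    (π : Measure W) [IsProbabilityMeasure π]
    (p : Z → W → ℝ)
    (hp_pos : ∀ z w, 0 < p z w)
    (hp_meas : Measurable (fun q : Z × W => p q.1 q.2))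
    (n m : ℕ) (D : Fin n → Z) (ι : Fin m → Fin n) (hι : StrictMono ι)
    (C Cr : ℝ)
    (hCint : Integrable (fun w => ∏ i, p (D i) w) π)
    (hC : C = ∫ w, ∏ i, p (D i) w ∂π)
    (hCpos : 0 < C)
    (hCrint : Integrable
      (fun w => ∏ i, if h : ∃ j, ι j = i then 1 else p (D i) w) π)
    (hCr : Cr = ∫ w, ∏ i, (if h : ∃ j, ι j = i then 1 else p (D i) w) ∂π)
    (hCrpos : 0 < Cr)
    (PWD PWDr : Measure W)
    (hPWD : PWD = π.withDensity (fun w => ENNReal.ofReal ((∏ i, p (D i) w) / C)))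
    (hPWDr : PWDr = π.withDensity
      (fun w => ENNReal.ofReal ((∏ i, if h : ∃ j, ι j = i then 1 else p (D i) w) / Cr))) :
    ∀ q : Measure W, IsProbabilityMeasure q →
      q ≪ π →
      Integrable (llr q PWD) q →
      Integrable (fun w => ∑ j, Real.log (p (D (ι j)) w)) q →
      ∫ w, llr q PWDr w ∂q =
        (∫ w, ∑ j, Real.log (p (D (ι j)) w) ∂q)
          + (∫ w, llr q PWD w ∂q) + Real.log (Cr / C) := by
  intro q hq hqπ hint1 hint2
  classical
  have hmeas_p : ∀ z : Z, Measurable (fun w => p z w) := fun z =>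
    hp_meas.comp (measurable_const.prodMk measurable_id)
  have hmeasg : Measurable (fun w => ∏ i, p (D i) w) :=
    Finset.measurable_prod _ fun i _ => hmeas_p (D i)
  have hmeasgr : Measurable (fun w => ∏ i, if h : ∃ j, ι j = i then 1 else p (D i) w) := by
    refine Finset.measurable_prod _ fun i _ => ?_
    by_cases h : ∃ j, ι j = i
    · simp only [dif_pos h]; exact measurable_const
    · simp only [dif_neg h]; exact hmeas_p (D i)
  have hgpos : ∀ w, 0 < ∏ i, p (D i) w := fun w =>
    Finset.prod_pos fun i _ => hp_pos (D i) w
  have hgrpos : ∀ w, 0 < ∏ i, if h : ∃ j, ι j = i then 1 else p (D i) w := fun w => by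
    refine Finset.prod_pos fun i _ => ?_
    by_cases h : ∃ j, ι j = i
    · simp [h]
    · simp only [dif_neg h]; exact hp_pos (D i) w
  have h1 : q.rnDeriv PWD =ᵐ[π]
      fun w => (ENNReal.ofReal ((∏ i, p (D i) w) / C))⁻¹ * q.rnDeriv π w := by
    rw [hPWD]
    refine Measure.rnDeriv_withDensity_right q π ((hmeasg.div_const C).ennreal_ofReal).aemeasurable
      (Filter.Eventually.of_forall fun w => ?_)
      (Filter.Eventually.of_forall fun w => ENNReal.ofReal_ne_top)
    simp only [ne_eq, ENNReal.ofReal_eq_zero, not_le]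
    exact div_pos (hgpos w) hCpos
  have h1r : q.rnDeriv PWDr =ᵐ[π]
      fun w => (ENNReal.ofReal ((∏ i, if h : ∃ j, ι j = i then 1 else p (D i) w) / Cr))⁻¹
        * q.rnDeriv π w := by
    rw [hPWDr]
    refine Measure.rnDeriv_withDensity_right q π
      ((hmeasgr.div_const Cr).ennreal_ofReal).aemeasurable
      (Filter.Eventually.of_forall fun w => ?_)
      (Filter.Eventually.of_forall fun w => ENNReal.ofReal_ne_top)
    simp only [ne_eq, ENNReal.ofReal_eq_zero, not_le]
    exact div_pos (hgrpos w) hCrpos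
  have hae : llr q PWDr =ᵐ[q] fun w =>
      (∑ j, Real.log (p (D (ι j)) w)) + llr q PWD w + Real.log (Cr / C) := by
    filter_upwards [hqπ.ae_le h1, hqπ.ae_le h1r, Measure.rnDeriv_pos hqπ,
      hqπ.ae_le (Measure.rnDeriv_lt_top q π)] with w hw1 hw1r hwpos hwlt
    have hrne : (q.rnDeriv π w).toReal ≠ 0 :=
      (ENNReal.toReal_pos hwpos.ne' hwlt.ne).ne'
    have hcompute : ∀ (a Cc : ℝ), 0 < Cc → 0 < a →
        Real.log (((ENNReal.ofReal (a / Cc))⁻¹ * q.rnDeriv π w).toReal)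
          = Real.log (q.rnDeriv π w).toReal - Real.log a + Real.log Cc := by
      intro a Cc hCc ha
      have haC : 0 < a / Cc := div_pos ha hCc
      rw [ENNReal.toReal_mul, ENNReal.toReal_inv, ENNReal.toReal_ofReal haC.le,
        Real.log_mul (inv_ne_zero haC.ne') hrne, Real.log_inv,
        Real.log_div ha.ne' hCc.ne']
      ring
    have e1 : llr q PWDr w
        = Real.log (q.rnDeriv π w).toReal - Real.log (∏ i, if h : ∃ j, ι j = i then 1
            else p (D i) w) + Real.log Cr := by
      rw [llr, hw1r]
      exact hcompute _ Cr hCrpos (hgrpos w)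
    have e2 : llr q PWD w
        = Real.log (q.rnDeriv π w).toReal - Real.log (∏ i, p (D i) w) + Real.log C := by
      rw [llr, hw1]
      exact hcompute _ C hCpos (hgpos w)
    have hsplit : Real.log (∏ i, p (D i) w)
        = (∑ j, Real.log (p (D (ι j)) w))
          + Real.log (∏ i, if h : ∃ j, ι j = i then 1 else p (D i) w) := by
      rw [prod_split_aux p D ι hι w,
        Real.log_mul (Finset.prod_pos fun j _ => hp_pos _ w).ne' (hgrpos w).ne']
      congr 1
      exact Real.log_prod fun j _ => (hp_pos _ w).ne'
    rw [e1, e2, Real.log_div hCrpos.ne' hCpos.ne', hsplit]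
    ring
  rw [integral_congr_ae hae]
  have hI : Integrable (fun w => (∑ j, Real.log (p (D (ι j)) w)) + llr q PWD w) q :=
    hint2.add hint1
  rw [integral_add hI (integrable_const _), integral_add hint2 hint1, integral_const]
  simp
end
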